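/- arXiv:1412.2278 — 2 statements merged into one kernel-verified Lean document; each statement's English description precedes it below -/
import Mathlib

section
/- For each k ≥ 2, define u_k on [0,1] by u_k(t) = k if t ∈ [l/k - 1/(2k²), l/k + 1/(2k²)] for some integer 1 ≤ l ≤ k-1, and u_k(t) = 0 otherwise, with state y_k(t) = ∫₀ᵗ u_k(s) ds. Then the cost ∫₀¹ (u_k(t)²/(1+u_k(t)⁴) + (y_k(t)-t)²) dt tends to 0 as k → ∞. -/
open MeasureTheory Set Filter Metric

/-!
The control `u_k` is a train of pulses of height `k` and width `1/k²` centred at the grid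
points `l/k`, so each pulse raises the state by exactly `1/k` and `y_k` is a staircase lagging
behind `t` by at most `1/k`. Quantitatively, `max (min t (c + r) - (c - r)) 0` is the length of
`[c - r, c + r] ∩ (-∞, t]`; the contribution of the pulse at `c` is squeezed between the
increments of `min t ·` over `[c, c + 1/k]` and over `[c - 1/k, c]`, and both bounds telescope
over `c = l/k`.
Since `u_k` only takes the values `0` and `k`, the running cost `u²/(1 + u⁴)` is at most
`k²/(1 + k⁴) ≤ 1/k²`, so the integrand is at most `2/k²` on `[0, 1]`.
-/

section Overlap

variable {K r c t : ℝ}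

lemma overlap_le_two_mul (hr : 0 ≤ r) : max (min t (c + r) - (c - r)) 0 ≤ 2 * r :=
  max_le (by linarith [min_le_right t (c + r)]) (by positivity)

lemma mul_overlap_le_sub_min (hK : 1 ≤ K) (hr : 0 ≤ r) :
    K * max (min t (c + r) - (c - r)) 0 ≤ min t c - min t (c - 2 * K * r) := by
  rcases le_total t (c - r) with h₁ | h₁
  · rw [max_eq_right (by linarith [min_le_left t (c + r)]), mul_zero]
    linarith [min_le_min_left t (show c - 2 * K * r ≤ c by nlinarith)]
  rw [min_eq_right (show c - 2 * K * r ≤ t by nlinarith)]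
  rcases le_total t c with h₂ | h₂
  · rw [min_eq_left h₂, min_eq_left (by linarith), max_eq_left (by linarith)]
    nlinarith
  · rw [min_eq_right h₂]
    nlinarith [overlap_le_two_mul (t := t) (c := c) hr]

lemma sub_min_le_mul_overlap (hK : 1 ≤ K) (hr : 0 ≤ r) :
    min t (c + 2 * K * r) - min t c ≤ K * max (min t (c + r) - (c - r)) 0 := by
  rcases le_total t c with h₁ | h₁
  · rw [min_eq_left h₁, min_eq_left (by nlinarith), sub_self]
    positivity
  rw [min_eq_right h₁]
  rcases le_total t (c + r) with h₂ | h₂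
  · rw [min_eq_left h₂, max_eq_left (by linarith)]
    nlinarith [min_le_left t (c + 2 * K * r)]
  · rw [min_eq_right h₂, max_eq_left (by linarith)]
    nlinarith [min_le_right t (c + 2 * K * r)]

end Overlap

lemma integral_indicator_closedBall_const {a c r t : ℝ} (hcr : 0 < c - r) (ht : 0 ≤ t) :
    ∫ s in (0 : ℝ)..t, (closedBall c r).indicator (fun _ => a) s
      = a * max (min t (c + r) - (c - r)) 0 := by
  have hinter : Ioc 0 t ∩ Icc (c - r) (c + r) = Icc (c - r) (min t (c + r)) := by
    ext s
    simp only [mem_inter_iff, mem_Ioc, mem_Icc, le_min_iff]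
    constructor
    · rintro ⟨⟨-, hst⟩, hcs, hsc⟩
      exact ⟨hcs, hst, hsc⟩
    · rintro ⟨hcs, hst, hsc⟩
      exact ⟨⟨hcr.trans_le hcs, hst⟩, hcs, hsc⟩
  rw [intervalIntegral.integral_of_le ht, Real.closedBall_eq_Icc,
    setIntegral_indicator measurableSet_Icc, hinter, setIntegral_const, Real.volume_real_Icc,
    smul_eq_mul, mul_comm]

noncomputable def pulseTrain (k : ℕ) (t : ℝ) : ℝ :=
  ∑ l ∈ Finset.Ico 1 k,
    (closedBall ((l : ℝ) / k) (1 / (2 * (k : ℝ) ^ 2))).indicator (fun _ => (k : ℝ)) t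

lemma pairwiseDisjoint_closedBall_pulse (k : ℕ) :
    (Finset.Ico 1 k : Set ℕ).PairwiseDisjoint
      fun l : ℕ => closedBall ((l : ℝ) / k) (1 / (2 * (k : ℝ) ^ 2)) := by
  intro l hl m hm hlm
  have hk : (2 : ℝ) ≤ k := by
    simp only [Finset.coe_Ico, mem_Ico] at hl
    exact_mod_cast (show 2 ≤ k by omega)
  apply closedBall_disjoint_closedBall
  have hdist : 1 / (k : ℝ) ≤ dist ((l : ℝ) / k) ((m : ℝ) / k) := by
    rw [Real.dist_eq, ← sub_div, abs_div, Nat.abs_cast,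
      div_le_div_iff_of_pos_right (by positivity)]
    exact_mod_cast Int.one_le_abs (sub_ne_zero.2 (Int.natCast_inj.not.2 hlm))
  have hradii : 1 / (2 * (k : ℝ) ^ 2) + 1 / (2 * (k : ℝ) ^ 2) < 1 / k := by
    rw [← add_div, div_lt_div_iff₀ (by positivity) (by positivity)]
    nlinarith
  linarith

open Classical in
lemma pulseTrain_eq_ite (k : ℕ) (t : ℝ) :
    pulseTrain k t =
      if ∃ l : ℕ, 1 ≤ l ∧ l ≤ k - 1 ∧ |t - (l : ℝ) / k| ≤ 1 / (2 * (k : ℝ) ^ 2)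
      then (k : ℝ) else 0 := by
  rw [pulseTrain, ← Finset.indicator_biUnion_apply _ _ (pairwiseDisjoint_closedBall_pulse k),
    indicator_apply]
  refine if_congr ?_ rfl rfl
  simp only [mem_iUnion, Finset.mem_Ico, mem_closedBall, Real.dist_eq, exists_prop]
  exact exists_congr fun l => ⟨fun ⟨⟨h₁, h₂⟩, h₃⟩ => ⟨h₁, by omega, h₃⟩,
    fun ⟨h₁, h₂, h₃⟩ => ⟨⟨h₁, by omega⟩, h₃⟩⟩

lemma integral_pulseTrain {k : ℕ} {t : ℝ} (ht : 0 ≤ t) :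
    ∫ s in (0 : ℝ)..t, pulseTrain k s = ∑ l ∈ Finset.Ico 1 k, (k : ℝ) *
      max (min t (l / k + 1 / (2 * (k : ℝ) ^ 2)) - (l / k - 1 / (2 * (k : ℝ) ^ 2))) 0 := by
  unfold pulseTrain
  rw [intervalIntegral.integral_finsetSum fun l _ =>
    ((integrable_indicator_iff measurableSet_closedBall).2
      (integrableOn_const measure_closedBall_lt_top.ne)).intervalIntegrable]
  refine Finset.sum_congr rfl fun l hl => integral_indicator_closedBall_const ?_ ht
  rw [Finset.mem_Ico] at hl
  have hk : (2 : ℝ) ≤ k := by exact_mod_cast (show 2 ≤ k by omega)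
  have hl : (1 : ℝ) ≤ l := by exact_mod_cast hl.1
  rw [sub_pos, div_lt_div_iff₀ (by positivity) (by positivity)]
  nlinarith

lemma abs_integral_pulseTrain_sub_le {k : ℕ} (hk : 1 ≤ k) {t : ℝ}
    (ht : t ∈ Icc (0 : ℝ) 1) :
    |(∫ s in (0 : ℝ)..t, pulseTrain k s) - t| ≤ 1 / k := by
  have hK : (1 : ℝ) ≤ k := by exact_mod_cast hk
  have hr : (0 : ℝ) ≤ 1 / (2 * (k : ℝ) ^ 2) := by positivity
  have hstep : 2 * (k : ℝ) * (1 / (2 * (k : ℝ) ^ 2)) = 1 / k := by field_simp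
  rw [integral_pulseTrain ht.1, abs_le]
  have hupper := Finset.sum_le_sum fun l (_ : l ∈ Finset.Ico 1 k) =>
    mul_overlap_le_sub_min (t := t) (c := (l : ℝ) / k) hK hr
  have hlower := Finset.sum_le_sum fun l (_ : l ∈ Finset.Ico 1 k) =>
    sub_min_le_mul_overlap (t := t) (c := (l : ℝ) / k) hK hr
  have htel₁ := Finset.sum_Ico_sub (fun n : ℕ => min t (((n : ℝ) - 1) / k)) hk
  have htel₂ := Finset.sum_Ico_sub (fun n : ℕ => min t ((n : ℝ) / k)) hk
  simp only [hstep, ← sub_div, ← add_div] at hupper hlower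
  push_cast at htel₁ htel₂
  simp only [add_sub_cancel_right] at htel₁
  rw [htel₁] at hupper
  rw [htel₂, div_self (by positivity), min_eq_left ht.2] at hlower
  rw [sub_self, zero_div, min_eq_right ht.1] at hupper
  constructor <;> linarith [min_le_left t ((k - 1 : ℝ) / k), min_le_right t (1 / (k : ℝ))]

lemma sq_div_one_add_pow_four_le (a : ℝ) : a ^ 2 / (1 + a ^ 4) ≤ 1 / a ^ 2 := by
  rcases eq_or_ne a 0 with rfl | ha
  · simp
  rw [div_le_div_iff₀ (by positivity) (by positivity)]
  nlinarith

lemma pulseTrain_cost_le {k : ℕ} (hk : 1 ≤ k) {t : ℝ} (ht : t ∈ Icc (0 : ℝ) 1) :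
    pulseTrain k t ^ 2 / (1 + pulseTrain k t ^ 4)
      + ((∫ s in (0 : ℝ)..t, pulseTrain k s) - t) ^ 2 ≤ 2 / (k : ℝ) ^ 2 := by
  have hcontrol : pulseTrain k t ^ 2 / (1 + pulseTrain k t ^ 4) ≤ 1 / (k : ℝ) ^ 2 := by
    rw [pulseTrain_eq_ite]
    split_ifs
    · exact sq_div_one_add_pow_four_le _
    · rw [zero_pow two_ne_zero, zero_div]
      positivity
  have hstate : ((∫ s in (0 : ℝ)..t, pulseTrain k s) - t) ^ 2 ≤ 1 / (k : ℝ) ^ 2 := by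
    rw [← sq_abs, ← one_div_pow]
    exact pow_le_pow_left₀ (abs_nonneg _) (abs_integral_pulseTrain_sub_le hk ht) 2
  calc _ ≤ 1 / (k : ℝ) ^ 2 + 1 / (k : ℝ) ^ 2 := add_le_add hcontrol hstate
    _ = 2 / (k : ℝ) ^ 2 := by ring

lemma norm_integral_pulseTrain_cost_le {k : ℕ} (hk : 1 ≤ k) :
    ‖∫ t in (0 : ℝ)..1, (pulseTrain k t ^ 2 / (1 + pulseTrain k t ^ 4)
      + ((∫ s in (0 : ℝ)..t, pulseTrain k s) - t) ^ 2)‖ ≤ 2 / (k : ℝ) ^ 2 := by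
  refine (intervalIntegral.norm_integral_le_of_norm_le_const (C := 2 / (k : ℝ) ^ 2)
    fun t ht => ?_).trans_eq (by simp)
  rw [uIoc_of_le zero_le_one] at ht
  exact (Real.norm_of_nonneg (by positivity)).trans_le
    (pulseTrain_cost_le hk (Ioc_subset_Icc_self ht))

open Classical in
/-- The explicit minimizing sequence `u_k` (equal to `k` on the intervals
`[l/k - 1/(2k²), l/k + 1/(2k²)]`, `1 ≤ l ≤ k-1`, and `0` elsewhere), with state
`y_k(t) = ∫₀ᵗ u_k`, drives the cost
`∫₀¹ (u_k²/(1+u_k⁴) + (y_k - t)²) dt` to `0` as `k → ∞`. -/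
theorem stmt2 (u : ℕ → ℝ → ℝ) (y : ℕ → ℝ → ℝ)
    (hu : ∀ k t, u k t =
      if ∃ l : ℕ, 1 ≤ l ∧ l ≤ k - 1 ∧ |t - (l : ℝ)/k| ≤ 1/(2*(k:ℝ)^2)
      then (k : ℝ) else 0)
    (hy : ∀ k t, y k t = ∫ s in (0:ℝ)..t, u k s) :
    Filter.Tendsto
      (fun k => ∫ t in (0:ℝ)..1,
        ((u k t)^2 / (1 + (u k t)^4) + (y k t - t)^2))
      Filter.atTop (nhds 0) := by
  obtain rfl : u = pulseTrain := funext₂ fun k t => by rw [hu, pulseTrain_eq_ite]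
  simp only [hy]
  refine squeeze_zero_norm' ?_ <| (tendsto_const_nhds (x := (2 : ℝ))).div_atTop
    ((tendsto_pow_atTop two_ne_zero).comp tendsto_natCast_atTop_atTop)
  filter_upwards [eventually_ge_atTop 1] with k hk
  simpa using norm_integral_pulseTrain_cost_le hk
end

section
/- Pushforward moment identity: let μ be a finite Borel measure on ℝᵐ, p a positive even integer, q(u) = u/(1+‖u‖_p^p)^{1/p}, and γ = q_*μ the pushforward of μ by q. Then for any multi-index α with |α| ≤ p, ∫ u^α/(1+‖u‖_p^p) dμ(u) = ∫ (1 - ‖w‖_p^p)^{(p-|α|)/p} w^α dγ(w). -/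
open MeasureTheory

/-!
Write `S(u) = 1 + ∑ⱼ uⱼ^p`, which is `≥ 1` since `p` is even. The map `q = u / S(u)^{1/p}`
satisfies `∑ⱼ q(u)ⱼ^p = (S(u) - 1) / S(u)`, hence `1 - ‖q(u)‖_p^p = S(u)⁻¹`, while
`q(u)^α = u^α / S(u)^{|α|/p}`. Multiplying, `(1 - ‖q(u)‖_p^p)^{(p-|α|)/p} q(u)^α = u^α / S(u)`
pointwise, and the change of variables formula for `γ = q_*μ` gives the identity.
-/

section LpNormalize

variable {ι : Type*} [Fintype ι] {p : ℕ}

noncomputable def lpNormalize (p : ℕ) (u : ι → ℝ) : ι → ℝ :=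
  fun i => u i / (1 + ∑ j, u j ^ p) ^ ((p : ℝ)⁻¹)

theorem one_add_sum_pow_pos (hev : Even p) (u : ι → ℝ) : 0 < 1 + ∑ j, u j ^ p := by
  have : 0 ≤ ∑ j, u j ^ p := Finset.sum_nonneg fun j _ => hev.pow_nonneg _
  linarith

theorem measurable_lpNormalize : Measurable (lpNormalize (ι := ι) p) := by
  unfold lpNormalize
  fun_prop

theorem sum_lpNormalize_pow (hp : p ≠ 0) (hev : Even p) (u : ι → ℝ) :
    ∑ j, lpNormalize p u j ^ p = (∑ j, u j ^ p) / (1 + ∑ j, u j ^ p) := by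
  simp only [lpNormalize, div_pow,
    Real.rpow_inv_natCast_pow (one_add_sum_pow_pos hev u).le hp, ← Finset.sum_div]

theorem one_sub_sum_lpNormalize_pow (hp : p ≠ 0) (hev : Even p) (u : ι → ℝ) :
    1 - ∑ j, lpNormalize p u j ^ p = (1 + ∑ j, u j ^ p)⁻¹ := by
  have hS := one_add_sum_pow_pos hev u
  rw [sum_lpNormalize_pow hp hev]
  field_simp
  ring

theorem prod_lpNormalize_pow (hev : Even p) (u : ι → ℝ) (α : ι → ℕ) :
    ∏ i, lpNormalize p u i ^ α i
      = (∏ i, u i ^ α i) / (1 + ∑ j, u j ^ p) ^ ((∑ i, (α i : ℝ)) / p) := by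
  unfold lpNormalize
  simp only [div_pow, Finset.prod_div_distrib, Finset.prod_pow_eq_pow_sum]
  rw [← Real.rpow_natCast, ← Real.rpow_mul (one_add_sum_pow_pos hev u).le]
  push_cast
  ring_nf

theorem moment_div_eq_lpNormalize (hp : p ≠ 0) (hev : Even p) (u : ι → ℝ) (α : ι → ℕ) :
    (∏ i, u i ^ α i) / (1 + ∑ j, u j ^ p)
      = (1 - ∑ j, lpNormalize p u j ^ p) ^ (((p : ℝ) - ∑ i, (α i : ℝ)) / p)
          * ∏ i, lpNormalize p u i ^ α i := by
  have hS := one_add_sum_pow_pos hev u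
  have hexp : (∑ i, (α i : ℝ)) / p + ((p : ℝ) - ∑ i, (α i : ℝ)) / p = 1 := by
    field_simp
    ring
  rw [one_sub_sum_lpNormalize_pow hp hev, prod_lpNormalize_pow hev, Real.inv_rpow hS.le,
    inv_mul_eq_div, div_div, ← Real.rpow_add hS, hexp, Real.rpow_one]

end LpNormalize

theorem stmt18_general (m p : ℕ) (hp : 0 < p) (hev : Even p)
    (μ : Measure (Fin m → ℝ))
    (q : (Fin m → ℝ) → (Fin m → ℝ))
    (hq : ∀ u, q u = fun i => u i / (1 + ∑ j, (u j) ^ p) ^ ((p : ℝ)⁻¹))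
    (γ : Measure (Fin m → ℝ)) (hγ : γ = μ.map q)
    (α : Fin m → ℕ) :
    (∫ u, (∏ i, (u i) ^ (α i)) / (1 + ∑ j, (u j) ^ p) ∂μ)
      = ∫ w, (1 - ∑ j, (w j) ^ p) ^ (((p : ℝ) - ∑ i, (α i : ℝ)) / p)
          * ∏ i, (w i) ^ (α i) ∂γ := by
  obtain rfl : q = lpNormalize p := funext hq
  subst hγ
  rw [integral_map measurable_lpNormalize.aemeasurable (by fun_prop)]
  simp only [moment_div_eq_lpNormalize hp.ne' hev]

/-- Pushforward moment identity: for a finite Borel measure `μ` on `ℝᵐ`, an even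
positive integer `p`, the map `q(u) = u/(1+‖u‖_p^p)^{1/p}` and the pushforward
`γ = q_*μ`, every multi-index `α` with `|α| ≤ p` satisfies
`∫ u^α/(1+‖u‖_p^p) dμ = ∫ (1-‖w‖_p^p)^{(p-|α|)/p} w^α dγ`. -/
theorem stmt18 (m p : ℕ) (hp : 0 < p) (hev : Even p)
    (μ : Measure (Fin m → ℝ)) [IsFiniteMeasure μ]
    (q : (Fin m → ℝ) → (Fin m → ℝ))
    (hq : ∀ u, q u = fun i => u i / (1 + ∑ j, (u j) ^ p) ^ ((p : ℝ)⁻¹))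
    (γ : Measure (Fin m → ℝ)) (hγ : γ = μ.map q)
    (α : Fin m → ℕ) (hα : (∑ i, α i) ≤ p) :
    (∫ u, (∏ i, (u i) ^ (α i)) / (1 + ∑ j, (u j) ^ p) ∂μ)
      = ∫ w, (1 - ∑ j, (w j) ^ p) ^ (((p : ℝ) - ∑ i, (α i : ℝ)) / p)
          * ∏ i, (w i) ^ (α i) ∂γ :=
  stmt18_general m p hp hev μ q hq γ hγ α
end
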